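/- The constructed order-2n sequences in the doubling theorem satisfy the PAF sum condition at even shifts: if A, B, C, D are Williamson of odd order n, then for even s with 1 ≤ s ≤ n, PAF_{A x B'}(s) + PAF_{(-A) x B'}(s) + PAF_{C x D'}(s) + PAF_{(-C) x D'}(s) = 2(PAF_A(s/2) + PAF_B(s/2) + PAF_C(s/2) + PAF_D(s/2)) = 0. -/

import Mathlib

open Finset

/-- Periodic cross-correlation of two integer sequences of length `n`. -/
def PCF (n : ℕ) (X Y : ℕ → ℤ) (s : ℕ) : ℤ :=
  ∑ k ∈ Finset.range n, X k * Y ((k + s) % n)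

/-- Periodic autocorrelation of an integer sequence of length `n`. -/
def PAF (n : ℕ) (X : ℕ → ℤ) (s : ℕ) : ℤ :=
  PCF n X X s

/-- Interleaving (perfect shuffle) of two sequences. -/
def interleave (X Y : ℕ → ℤ) : ℕ → ℤ :=
  fun k => if k % 2 = 0 then X (k / 2) else Y (k / 2)

/-- Entrywise negation of a sequence. -/
def negSeq (X : ℕ → ℤ) : ℕ → ℤ :=
  fun k => -X k

/-- Cyclic shift of a length-`n` sequence by offset `m`. -/
def cshift (n m : ℕ) (X : ℕ → ℤ) : ℕ → ℤ :=
  fun k => X ((k + (n - m % n)) % n)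

/-- A ±1 sequence of length `n`. -/
def IsPM1 (n : ℕ) (X : ℕ → ℤ) : Prop :=
  ∀ k < n, X k = 1 ∨ X k = -1

/-- A symmetric sequence of length `n`: `x_k = x_{n-k}` for `k = 1, …, n-1`. -/
def SeqSymm (n : ℕ) (X : ℕ → ℤ) : Prop :=
  ∀ k, 1 ≤ k → k < n → X k = X (n - k)

/-- Williamson sequences of order `n`. -/
def IsWilliamson (n : ℕ) (A B C D : ℕ → ℤ) : Prop :=
  IsPM1 n A ∧ IsPM1 n B ∧ IsPM1 n C ∧ IsPM1 n D ∧
  SeqSymm n A ∧ SeqSymm n B ∧ SeqSymm n C ∧ SeqSymm n D ∧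
  ∀ s, 1 ≤ s → s ≤ n / 2 → PAF n A s + PAF n B s + PAF n C s + PAF n D s = 0


lemma sum_rot (n : ℕ) [NeZero n] (c : ℕ) (f : ℕ → ℤ) :
    ∑ k ∈ range n, f ((k + c) % n) = ∑ k ∈ range n, f k := by
  rw [← Fin.sum_univ_eq_sum_range fun k => f ((k + c) % n),
      ← Fin.sum_univ_eq_sum_range fun k => f k]
  rw [← Equiv.sum_comp (Equiv.addRight (Fin.ofNat n c)) (fun i : Fin n => f i.val)]
  refine Finset.sum_congr rfl fun i _ => ?_
  congr 1
  simp [Equiv.addRight, Fin.add_def, Fin.val_ofNat, Nat.add_mod]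

lemma sum_range_two_mul (n : ℕ) (f : ℕ → ℤ) :
    ∑ i ∈ range (2 * n), f i = ∑ i ∈ range n, (f (2 * i) + f (2 * i + 1)) := by
  induction n with
  | zero => simp
  | succ m ih =>
    rw [show 2 * (m + 1) = 2 * m + 1 + 1 by ring, Finset.sum_range_succ,
      Finset.sum_range_succ, Finset.sum_range_succ, ih]
    ring

lemma odd_mod' (a n : ℕ) (hn : 0 < n) : (2 * a + 1) % (2 * n) = 2 * (a % n) + 1 := by
  have h1 : a % n < n := Nat.mod_lt _ hn
  have h2 := Nat.div_add_mod a n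
  have : 2 * a + 1 = (2 * (a % n) + 1) + (a / n) * (2 * n) := by nlinarith [h2]
  rw [this, Nat.add_mul_mod_self_right, Nat.mod_eq_of_lt (by omega)]

lemma PAF_neg (n : ℕ) (X : ℕ → ℤ) (s : ℕ) : PAF n (negSeq X) s = PAF n X s := by
  simp [PAF, PCF, negSeq]

lemma PAF_cshift (n : ℕ) [NeZero n] (m : ℕ) (X : ℕ → ℤ) (s : ℕ) :
    PAF n (cshift n m X) s = PAF n X s := by
  unfold PAF PCF cshift
  set c := n - m % n
  have key : ∀ k, X ((k + c) % n) * X (((k + s) % n + c) % n)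
      = (fun j => X j * X ((j + s) % n)) ((k + c) % n) := by
    intro k
    simp only
    congr 2
    rw [Nat.mod_add_mod, Nat.mod_add_mod, Nat.add_right_comm]
  calc ∑ k ∈ range n, X ((k + c) % n) * X (((k + s) % n + c) % n)
      = ∑ k ∈ range n, (fun j => X j * X ((j + s) % n)) ((k + c) % n) :=
        Finset.sum_congr rfl fun k _ => key k
    _ = ∑ k ∈ range n, X k * X ((k + s) % n) := by
        simpa using sum_rot n c fun j => X j * X ((j + s) % n)

lemma PAF_interleave (n : ℕ) [NeZero n] (X Y : ℕ → ℤ) (t : ℕ) :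
    PAF (2 * n) (interleave X Y) (2 * t) = PAF n X t + PAF n Y t := by
  have hn : 0 < n := Nat.pos_of_ne_zero (NeZero.ne n)
  unfold PAF PCF
  rw [sum_range_two_mul, ← Finset.sum_add_distrib]
  refine Finset.sum_congr rfl fun j hj => ?_
  have he : (2 * j + 2 * t) % (2 * n) = 2 * ((j + t) % n) := by
    rw [← Nat.mul_add, Nat.mul_mod_mul_left]
  have ho : (2 * j + 1 + 2 * t) % (2 * n) = 2 * ((j + t) % n) + 1 := by
    rw [show 2 * j + 1 + 2 * t = 2 * (j + t) + 1 by ring, odd_mod' _ _ hn]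
  rw [he, ho]
  simp [interleave, Nat.mul_div_cancel_left, Nat.mul_add_div, Nat.mul_add_mod]

theorem doubling_even_shifts (n : ℕ) (hn : Odd n) (A B C D : ℕ → ℤ)
    (h : IsWilliamson n A B C D) (s : ℕ) (hs : s % 2 = 0) (hs1 : 1 ≤ s) (hsn : s ≤ n) :
    PAF (2 * n) (interleave A (cshift n ((n - 1) / 2) B)) s +
        PAF (2 * n) (interleave (negSeq A) (cshift n ((n - 1) / 2) B)) s +
        PAF (2 * n) (interleave C (cshift n ((n - 1) / 2) D)) s +
        PAF (2 * n) (interleave (negSeq C) (cshift n ((n - 1) / 2) D)) s =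
      2 * (PAF n A (s / 2) + PAF n B (s / 2) + PAF n C (s / 2) + PAF n D (s / 2)) ∧
    2 * (PAF n A (s / 2) + PAF n B (s / 2) + PAF n C (s / 2) + PAF n D (s / 2)) = 0 := by
  have hn0 : 0 < n := hn.pos
  haveI : NeZero n := ⟨hn0.ne'⟩
  set t := s / 2 with ht
  have hst : s = 2 * t := by omega
  obtain ⟨_, _, _, _, _, _, _, _, hW⟩ := h
  have h2 : 2 * (PAF n A t + PAF n B t + PAF n C t + PAF n D t) = 0 := by
    rw [hW t (by omega) (by omega)]; ring
  constructor
  · rw [hst, PAF_interleave, PAF_interleave, PAF_interleave, PAF_interleave,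
      PAF_neg, PAF_neg, PAF_cshift, PAF_cshift]
    ring
  · exact h2
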